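/- arXiv:1807.00045 — 2 statements merged into one kernel-verified Lean document; each statement's English description precedes it below -/
import Mathlib

section
/- Let UΔ = V Σ Wᵀ Δ be a core SVD of UΔ : ℝ^s_Δ → ℝ^m_M with Vᵀ M V = I and Wᵀ Δ W = I, where V ∈ ℝ^{m×k}, W ∈ ℝ^{s×k}, Σ ∈ ℝ^{k×k} diagonal with positive entries. Let c ∈ ℝ^m, δ > 0, define h = c − V Vᵀ M c, p = ‖h‖_M, and assume p > 0. Let Q = [[Σ, δ^{1/2} Vᵀ M c],[0, δ^{1/2} p]] ∈ ℝ^{(k+1)×(k+1)}, and suppose Q = V_Q Σ_Q W_Qᵀ with V_Qᵀ V_Q = I, W_Qᵀ W_Q = I, Σ_Q diagonal positive. Then [U c] Δ_new = V_new Σ_Q W_newᵀ Δ_new, where Δ_new = diag(Δ, δ), V_new = [V, h/p] V_Q satisfies V_newᵀ M V_new = I, and W_new = [[W, 0],[0, δ^{-1/2}]] W_Q satisfies W_newᵀ Δ_new W_new = I. -/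
/-!
Since `h = c - V Vᵀ M c` is `M`-orthogonal to the columns of `V`, the bordered matrix
`A = [V, h/p]` satisfies `Aᵀ M A = 1`, and `c = V (Vᵀ M c) + p (h/p)` gives
`A Q diag(W, δ^{-1/2})ᵀ = [V Σ Wᵀ, c]`. Substituting `Q = V_Q Σ_Q W_Qᵀ` yields the new
factorization, and right multiplication by the orthogonal `V_Q`, `W_Q` preserves the
orthonormality of `A` and of `diag(W, δ^{-1/2})` with respect to `M` and `Δ_new`.
-/

open scoped Matrix

namespace Matrix

variable {ι κ ν R : Type*}

section CommRing

variable [CommRing R]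

theorem transpose_mul_mul_mul_eq_one [Fintype ι] [Fintype κ] [DecidableEq κ] [DecidableEq ν]
    {M : Matrix ι ι R} {A : Matrix ι κ R} {B : Matrix κ ν R}
    (hA : Aᵀ * M * A = 1) (hB : Bᵀ * B = 1) : (A * B)ᵀ * M * (A * B) = 1 := by
  calc (A * B)ᵀ * M * (A * B) = Bᵀ * (Aᵀ * M * A) * B := by
        simp only [transpose_mul, Matrix.mul_assoc]
    _ = 1 := by rw [hA, Matrix.mul_one, hB]

theorem transpose_mulVec_mulVec_sub_proj_eq_zero [Fintype ι] [Fintype κ] [DecidableEq κ]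
    {M : Matrix ι ι R} {V : Matrix ι κ R} (hV : Vᵀ * M * V = 1) (c : ι → R) :
    Vᵀ *ᵥ (M *ᵥ (c - V *ᵥ (Vᵀ *ᵥ (M *ᵥ c)))) = 0 := by
  rw [mulVec_sub, mulVec_sub, mulVec_mulVec, mulVec_mulVec, mulVec_mulVec, hV, one_mulVec,
    sub_self]

theorem fromCols_replicateCol_transpose_mul_mul_eq_one [Fintype ι] [Fintype κ] [DecidableEq κ]
    {M : Matrix ι ι R} (hM : M.IsSymm) {V : Matrix ι κ R} (hV : Vᵀ * M * V = 1) {u : ι → R}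
    (horth : Vᵀ *ᵥ (M *ᵥ u) = 0) (hu : u ⬝ᵥ M *ᵥ u = 1) :
    (fromCols V (replicateCol Unit u))ᵀ * M * fromCols V (replicateCol Unit u) = 1 := by
  have hVu : Vᵀ * M * replicateCol Unit u = 0 := by
    rw [Matrix.mul_assoc, ← replicateCol_mulVec, ← replicateCol_mulVec, horth,
      replicateCol_zero]
  have huV : replicateRow Unit u * M * V = 0 := by
    rw [← transpose_zero, ← hVu, transpose_mul, transpose_mul, transpose_transpose,
      transpose_replicateCol, hM.eq, Matrix.mul_assoc]
  have huu : replicateRow Unit u * M * replicateCol Unit u = 1 := by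
    rw [Matrix.mul_assoc, ← replicateCol_mulVec, replicateRow_mul_replicateCol, hu]
    ext; simp
  rw [transpose_fromCols, transpose_replicateCol, fromRows_mul, fromRows_mul_fromCols, hV, hVu,
    huV, huu, fromBlocks_one]

theorem fromBlocks_transpose_mul_fromBlocks_mul_fromBlocks_eq_one {μ : Type*} [Fintype ι]
    [Fintype μ] [DecidableEq κ] [DecidableEq ν] {D : Matrix ι ι R} {E : Matrix μ μ R}
    {W : Matrix ι κ R} {X : Matrix μ ν R} (hW : Wᵀ * D * W = 1) (hX : Xᵀ * E * X = 1) :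
    (fromBlocks W 0 0 X)ᵀ * fromBlocks D 0 0 E * fromBlocks W 0 0 X = 1 := by
  simp only [fromBlocks_transpose, fromBlocks_multiply, transpose_zero, Matrix.mul_zero,
    Matrix.zero_mul, add_zero, zero_add, hW, hX, fromBlocks_one]

end CommRing

theorem inv_smul_one_transpose_mul_smul_one_mul_eq_one {K : Type*} [Field K] [Fintype ι]
    [DecidableEq ι] {t d : K} (ht : t ≠ 0) (htd : t * t = d) :
    (t⁻¹ • (1 : Matrix ι ι K))ᵀ * (d • 1) * (t⁻¹ • 1) = 1 := by
  rw [transpose_smul, transpose_one, smul_mul_smul, Matrix.one_mul, smul_mul, Matrix.one_mul,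
    smul_smul, ← htd, show t⁻¹ * (t * t) * t⁻¹ = 1 by field_simp, one_smul]

theorem inv_smul_dotProduct_mulVec_inv_smul_eq_one [Fintype ι] {M : Matrix ι ι ℝ}
    {v : ι → ℝ} {p : ℝ} (hp : p = √(v ⬝ᵥ M *ᵥ v)) (hppos : 0 < p) :
    (p⁻¹ • v) ⬝ᵥ M *ᵥ (p⁻¹ • v) = 1 := by
  have hq : v ⬝ᵥ M *ᵥ v = p * p := by
    rw [hp, Real.mul_self_sqrt (Real.sqrt_pos.1 (hp ▸ hppos)).le]
  rw [mulVec_smul, smul_dotProduct, dotProduct_smul, hq, smul_eq_mul, smul_eq_mul]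
  field_simp

theorem fromCols_mul_fromBlocks_mul_transpose_fromBlocks {K : Type*} [Field K] [Fintype κ]
    (V : Matrix ι κ K) (u : ι → K) (S : Matrix κ κ K) (W : Matrix ν κ K) (y : κ → K)
    {t : K} (ht : t ≠ 0) (p : K) :
    fromCols V (replicateCol Unit u) *
        fromBlocks S (replicateCol Unit (t • y)) 0 ((t * p) • (1 : Matrix Unit Unit K)) *
        (fromBlocks W 0 0 (t⁻¹ • (1 : Matrix Unit Unit K)))ᵀ =
      fromCols (V * S * Wᵀ) (replicateCol Unit (V *ᵥ y + p • u)) := by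
  rw [fromCols_mul_fromBlocks, fromBlocks_transpose, fromCols_mul_fromBlocks]
  simp only [Matrix.mul_zero, add_zero, transpose_zero, zero_add]
  congr 1
  rw [← replicateCol_mulVec, Matrix.mul_smul, Matrix.mul_one, ← replicateCol_smul,
    ← replicateCol_add, transpose_smul, transpose_one, Matrix.mul_smul, Matrix.mul_one,
    ← replicateCol_smul, mulVec_smul, mul_smul, ← smul_add, smul_smul, inv_mul_cancel₀ ht,
    one_smul]

end Matrix

theorem incremental_svd_exact_update_general {m s k : ℕ}
    (M : Matrix (Fin m) (Fin m) ℝ) (hMsymm : M.IsSymm)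
    (D : Matrix (Fin s) (Fin s) ℝ)
    (U : Matrix (Fin m) (Fin s) ℝ)
    (V : Matrix (Fin m) (Fin k) ℝ) (W : Matrix (Fin s) (Fin k) ℝ)
    (S : Matrix (Fin k) (Fin k) ℝ)
    (hSVD : U * D = V * S * Wᵀ * D) (hV : Vᵀ * M * V = 1) (hW : Wᵀ * D * W = 1)
    (c : Fin m → ℝ) (δ : ℝ) (hδ : 0 < δ)
    (h : Fin m → ℝ) (hh : h = c - V *ᵥ (Vᵀ *ᵥ (M *ᵥ c)))
    (p : ℝ) (hp : p = Real.sqrt (h ⬝ᵥ M *ᵥ h)) (hppos : 0 < p)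
    (Q : Matrix (Fin k ⊕ Unit) (Fin k ⊕ Unit) ℝ)
    (hQ : Q = Matrix.fromBlocks S
      (Matrix.replicateCol Unit (Real.sqrt δ • (Vᵀ *ᵥ (M *ᵥ c)))) 0
      ((Real.sqrt δ * p) • 1))
    (VQ SQ WQ : Matrix (Fin k ⊕ Unit) (Fin k ⊕ Unit) ℝ)
    (hQsvd : Q = VQ * SQ * WQᵀ)
    (hVQ : VQᵀ * VQ = 1) (hWQ : WQᵀ * WQ = 1)
    (Unew : Matrix (Fin m) (Fin s ⊕ Unit) ℝ)
    (hUnew : Unew = Matrix.fromCols U (Matrix.replicateCol Unit c))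
    (Dnew : Matrix (Fin s ⊕ Unit) (Fin s ⊕ Unit) ℝ)
    (hDnew : Dnew = Matrix.fromBlocks D 0 0 (δ • 1))
    (Vnew : Matrix (Fin m) (Fin k ⊕ Unit) ℝ)
    (hVnew : Vnew = Matrix.fromCols V (Matrix.replicateCol Unit (p⁻¹ • h)) * VQ)
    (Wnew : Matrix (Fin s ⊕ Unit) (Fin k ⊕ Unit) ℝ)
    (hWnew : Wnew = Matrix.fromBlocks W 0 0 ((Real.sqrt δ)⁻¹ • 1) * WQ) :
    Unew * Dnew = Vnew * SQ * Wnewᵀ * Dnew ∧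
    Vnewᵀ * M * Vnew = 1 ∧
    Wnewᵀ * Dnew * Wnew = 1 := by
  -- As stated, `hWnew` multiplies through `CStarMatrix`'s `HMul` instance; restate it for `Matrix`.
  replace hWnew :
      Wnew = Matrix.fromBlocks W 0 0 ((√δ)⁻¹ • (1 : Matrix Unit Unit ℝ)) * WQ := hWnew
  have hsqrt : √δ ≠ 0 := (Real.sqrt_pos.2 hδ).ne'
  have hc : V *ᵥ (Vᵀ *ᵥ (M *ᵥ c)) + p • p⁻¹ • h = c := by
    rw [smul_smul, mul_inv_cancel₀ hppos.ne', one_smul, hh, add_sub_cancel]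
  have hfactor :
      Vnew * SQ * Wnewᵀ = Matrix.fromCols (V * S * Wᵀ) (Matrix.replicateCol Unit c) := by
    rw [hVnew, hWnew, Matrix.transpose_mul, ← hc,
      ← Matrix.fromCols_mul_fromBlocks_mul_transpose_fromBlocks _ _ _ _ _ hsqrt, ← hQ, hQsvd]
    simp only [Matrix.mul_assoc]
  have horth : Vᵀ *ᵥ (M *ᵥ (p⁻¹ • h)) = 0 := by
    rw [Matrix.mulVec_smul, Matrix.mulVec_smul, hh,
      Matrix.transpose_mulVec_mulVec_sub_proj_eq_zero hV, smul_zero]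
  have hA := Matrix.fromCols_replicateCol_transpose_mul_mul_eq_one hMsymm hV horth
    (Matrix.inv_smul_dotProduct_mulVec_inv_smul_eq_one hp hppos)
  have hB := Matrix.fromBlocks_transpose_mul_fromBlocks_mul_fromBlocks_eq_one hW
    (Matrix.inv_smul_one_transpose_mul_smul_one_mul_eq_one (ι := Unit) hsqrt
      (Real.mul_self_sqrt hδ.le))
  refine ⟨?_, hVnew ▸ Matrix.transpose_mul_mul_mul_eq_one hA hVQ,
    hWnew ▸ hDnew ▸ Matrix.transpose_mul_mul_mul_eq_one hB hWQ⟩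
  rw [hUnew, hDnew, hfactor, Matrix.fromCols_mul_fromBlocks, Matrix.fromCols_mul_fromBlocks, hSVD]
  simp only [Matrix.mul_zero, add_zero]

/-- cf. Theorem 4.1: exact incremental update of the core SVD
`U D = V S Wᵀ D` (with `D = Δ = diag(δ_1,…,δ_s)`, `Vᵀ M V = I`, `Wᵀ D W = I`,
`S = Σ` diagonal positive) when a new column `c` and a new time step `δ > 0` are added.
With `h = c − V Vᵀ M c`, `p = ‖h‖_M > 0`,
`Q = [[S, δ^{1/2} Vᵀ M c],[0, δ^{1/2} p]] = V_Q S_Q W_Qᵀ` a standard core SVD,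
the updated factorization is `[U c] D_new = V_new S_Q W_newᵀ D_new` with
`V_new = [V, h/p] V_Q` `M`-orthonormal and `W_new = [[W,0],[0,δ^{-1/2}]] W_Q`
`D_new`-orthonormal, where `D_new = diag(D, δ)`. -/
theorem incremental_svd_exact_update {m s k : ℕ}
    (M : Matrix (Fin m) (Fin m) ℝ) (hMsymm : M.IsSymm) (hMpd : M.PosDef)
    (d : Fin s → ℝ) (hd : ∀ i, 0 < d i)
    (D : Matrix (Fin s) (Fin s) ℝ) (hD : D = Matrix.diagonal d)
    (U : Matrix (Fin m) (Fin s) ℝ)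
    (V : Matrix (Fin m) (Fin k) ℝ) (W : Matrix (Fin s) (Fin k) ℝ)
    (S : Matrix (Fin k) (Fin k) ℝ)
    (hSdiag : ∃ σ : Fin k → ℝ, (∀ i, 0 < σ i) ∧ S = Matrix.diagonal σ)
    (hSVD : U * D = V * S * Wᵀ * D) (hV : Vᵀ * M * V = 1) (hW : Wᵀ * D * W = 1)
    (c : Fin m → ℝ) (δ : ℝ) (hδ : 0 < δ)
    (h : Fin m → ℝ) (hh : h = c - V *ᵥ (Vᵀ *ᵥ (M *ᵥ c)))
    (p : ℝ) (hp : p = Real.sqrt (h ⬝ᵥ M *ᵥ h)) (hppos : 0 < p)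
    (Q : Matrix (Fin k ⊕ Unit) (Fin k ⊕ Unit) ℝ)
    (hQ : Q = Matrix.fromBlocks S
      (Matrix.replicateCol Unit (Real.sqrt δ • (Vᵀ *ᵥ (M *ᵥ c)))) 0
      ((Real.sqrt δ * p) • 1))
    (VQ SQ WQ : Matrix (Fin k ⊕ Unit) (Fin k ⊕ Unit) ℝ)
    (hQsvd : Q = VQ * SQ * WQᵀ)
    (hVQ : VQᵀ * VQ = 1) (hWQ : WQᵀ * WQ = 1)
    (hSQdiag : ∃ σ : Fin k ⊕ Unit → ℝ, (∀ i, 0 < σ i) ∧ SQ = Matrix.diagonal σ)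
    (Unew : Matrix (Fin m) (Fin s ⊕ Unit) ℝ)
    (hUnew : Unew = Matrix.fromCols U (Matrix.replicateCol Unit c))
    (Dnew : Matrix (Fin s ⊕ Unit) (Fin s ⊕ Unit) ℝ)
    (hDnew : Dnew = Matrix.fromBlocks D 0 0 (δ • 1))
    (Vnew : Matrix (Fin m) (Fin k ⊕ Unit) ℝ)
    (hVnew : Vnew = Matrix.fromCols V (Matrix.replicateCol Unit (p⁻¹ • h)) * VQ)
    (Wnew : Matrix (Fin s ⊕ Unit) (Fin k ⊕ Unit) ℝ)
    (hWnew : Wnew = Matrix.fromBlocks W 0 0 ((Real.sqrt δ)⁻¹ • 1) * WQ) :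
    Unew * Dnew = Vnew * SQ * Wnewᵀ * Dnew ∧
    Vnewᵀ * M * Vnew = 1 ∧
    Wnewᵀ * Dnew * Wnew = 1 :=
  incremental_svd_exact_update_general M hMsymm D U V W S hSVD hV hW c δ hδ h hh p hp hppos Q hQ VQ
    SQ WQ hQsvd hVQ hWQ Unew hUnew Dnew hDnew Vnew hVnew Wnew hWnew
end

section
/- With the same setting (piecewise constant data u with coefficient matrix U, Gram matrix M, time-step matrix Δ, POD operator K with adjoint K* given by (K* x)(t) = (x, u(t))_X): if σ > 0, x = Σ_k v_k φ_k, and f = Σ_ℓ w_ℓ χ_ℓ, then K* x = σ f holds if and only if Uᵀ M v = σ Δ w, i.e., (UΔ)* v = σ w where (UΔ)* = Uᵀ M is the adjoint of UΔ : ℝ^s_Δ → ℝ^m_M. -/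
/-!
Expanding `x` and `u(τ)` in the family `φ`, the function `τ ↦ ⟪x, u(τ)⟫` is the step function on
the grid `t` whose value on the `j`-th cell is `⟪Σ_k v_k φ_k, Σ_k U_kj φ_k⟫ = (Uᵀ M v)_j`, while
`σ f` is the step function with values `σ w_j`. Since every cell has positive length, two step
functions on the same grid agree a.e. on `(t 0, t s) = (0, T)` exactly when their values agree.
-/

open MeasureTheory Set
open scoped Matrix InnerProductSpace

theorem Matrix.transpose_mulVec_gram_mulVec_apply {E ι κ : Type*} [NormedAddCommGroup E]
    [InnerProductSpace ℝ E] [Fintype ι] (φ : ι → E) (U : Matrix ι κ ℝ) (v : ι → ℝ) (j : κ) :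
    (Uᵀ *ᵥ (gram ℝ φ *ᵥ v)) j = ⟪∑ k, v k • φ k, ∑ k, U k j • φ k⟫_ℝ := by
  rw [real_inner_comm, ← star_dotProduct_gram_mulVec, star_trivial]
  rfl

section StepFunction

variable {s : ℕ} {t : Fin (s + 1) → ℝ}

noncomputable def stepFun (t : Fin (s + 1) → ℝ) (c : Fin s → ℝ) (τ : ℝ) : ℝ :=
  ∑ j, c j * (Ioo (t j.castSucc) (t j.succ)).indicator (fun _ => 1) τ

theorem stepFun_smul (t : Fin (s + 1) → ℝ) (a : ℝ) (c : Fin s → ℝ) :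
    stepFun t (a • c) = a • stepFun t c := by
  funext τ
  simp only [stepFun, Pi.smul_apply, smul_eq_mul, Finset.mul_sum, mul_assoc]

theorem Monotone.pairwise_disjoint_on_Ioo_castSucc_succ (ht : Monotone t) :
    Pairwise (Function.onFun Disjoint fun j : Fin s => Ioo (t j.castSucc) (t j.succ)) :=
  (pairwise_disjoint_on _).2 fun _ _ hij => .mono Ioo_subset_Ioc_self Ioo_subset_Ioc_self
    (Ioc_disjoint_Ioc_of_le (ht (Fin.succ_le_castSucc_iff.2 hij)))

theorem Monotone.Ioo_castSucc_succ_subset (ht : Monotone t) (j : Fin s) :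
    Ioo (t j.castSucc) (t j.succ) ⊆ Ioo (t 0) (t (Fin.last s)) :=
  Ioo_subset_Ioo (ht (Fin.zero_le _)) (ht (Fin.le_last _))

theorem stepFun_apply_of_mem (ht : Monotone t) (c : Fin s → ℝ) {j : Fin s} {τ : ℝ}
    (hτ : τ ∈ Ioo (t j.castSucc) (t j.succ)) : stepFun t c τ = c j := by
  rw [stepFun, Finset.sum_eq_single j]
  · simp [indicator_of_mem hτ]
  · intro i _ hij
    have hτi : τ ∉ Ioo (t i.castSucc) (t i.succ) :=
      (ht.pairwise_disjoint_on_Ioo_castSucc_succ hij).notMem_of_mem_right hτ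
    simp [indicator_of_notMem hτi]
  · simp

theorem stepFun_ae_eq_iff (ht : StrictMono t) {a b : Fin s → ℝ} :
    stepFun t a =ᵐ[volume.restrict (Ioo (t 0) (t (Fin.last s)))] stepFun t b ↔ a = b := by
  refine ⟨fun h => funext fun j => ?_, fun h => h ▸ .rfl⟩
  have hj := ae_restrict_of_ae_restrict_of_subset (ht.monotone.Ioo_castSucc_succ_subset j) h
  have : (ae (volume.restrict (Ioo (t j.castSucc) (t j.succ)))).NeBot :=
    ae_restrict_neBot.2 (by simp [ht Fin.castSucc_lt_succ])
  obtain ⟨τ, hτ, heq⟩ := ((ae_restrict_mem measurableSet_Ioo).and hj).exists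
  rwa [stepFun_apply_of_mem ht.monotone a hτ, stepFun_apply_of_mem ht.monotone b hτ] at heq

end StepFunction

theorem pod_adjoint_eq_iff_matrix_general
    {X : Type*} [NormedAddCommGroup X] [InnerProductSpace ℝ X]
    {m s : ℕ}
    (T : ℝ)
    (t : Fin (s + 1) → ℝ) (ht : StrictMono t)
    (ht0 : t 0 = 0) (htT : t (Fin.last s) = T)
    (φ : Fin m → X)
    (M : Matrix (Fin m) (Fin m) ℝ) (hM : ∀ j k, M j k = inner ℝ (φ j) (φ k))
    (U : Matrix (Fin m) (Fin s) ℝ)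
    (χ : Fin s → ℝ → ℝ)
    (hχ : ∀ j, χ j = Set.indicator (Set.Ioo (t j.castSucc) (t j.succ)) fun _ => (1 : ℝ))
    (u : ℝ → X)
    (hu : ∀ τ, u τ = ∑ j, χ j τ • (∑ k, U k j • φ k))
    (σ : ℝ)
    (w : Fin s → ℝ) (f : ℝ → ℝ) (hf : ∀ τ, f τ = ∑ ℓ, w ℓ * χ ℓ τ)
    (v : Fin m → ℝ) (x : X) (hx : x = ∑ k, v k • φ k) :
    ((fun τ => (inner ℝ x (u τ) : ℝ))
        =ᵐ[volume.restrict (Set.Ioo (0 : ℝ) T)] fun τ => σ * f τ) ↔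
      Uᵀ *ᵥ (M *ᵥ v) = σ • w := by
  obtain rfl : M = Matrix.gram ℝ φ := Matrix.ext hM
  have hadjoint : (fun τ => inner ℝ x (u τ)) = stepFun t (Uᵀ *ᵥ (Matrix.gram ℝ φ *ᵥ v)) := by
    funext τ
    simp only [hu, inner_sum, real_inner_smul_right, stepFun, hχ, hx,
      Matrix.transpose_mulVec_gram_mulVec_apply, mul_comm]
  have hσf : (fun τ => σ * f τ) = stepFun t (σ • w) := by
    rw [stepFun_smul]
    funext τ
    simp only [Pi.smul_apply, smul_eq_mul, hf, hχ, stepFun]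
  rw [hadjoint, hσf, ← ht0, ← htT]
  exact stepFun_ae_eq_iff ht

/-- part of Proposition 3.1: In the same setting (piecewise constant
data `u` with coefficient matrix `U`, Gram matrix `M`, time steps `δ_j`, POD adjoint
`(K* x)(t) = (x, u(t))_X`): for `σ > 0`, `x = Σ_k v_k φ_k`, `f = Σ_ℓ w_ℓ χ_ℓ`,
`K* x = σ f` (as elements of `L²(0,T)`, i.e. a.e. on `(0,T)`) holds iff
`(UΔ)* v = σ w`, where `(UΔ)* = Uᵀ M` is the adjoint of `UΔ : ℝ^s_Δ → ℝ^m_M`. -/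
theorem pod_adjoint_eq_iff_matrix
    {X : Type*} [NormedAddCommGroup X] [InnerProductSpace ℝ X] [CompleteSpace X]
    {m s : ℕ}
    (T : ℝ) (hT : 0 < T)
    (t : Fin (s + 1) → ℝ) (ht : StrictMono t)
    (ht0 : t 0 = 0) (htT : t (Fin.last s) = T)
    (δ : Fin s → ℝ) (hδ : ∀ j, δ j = t j.succ - t j.castSucc)
    (D : Matrix (Fin s) (Fin s) ℝ) (hD : D = Matrix.diagonal δ)
    (φ : Fin m → X) (hφ : LinearIndependent ℝ φ)
    (M : Matrix (Fin m) (Fin m) ℝ) (hM : ∀ j k, M j k = inner ℝ (φ j) (φ k))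
    (U : Matrix (Fin m) (Fin s) ℝ)
    (χ : Fin s → ℝ → ℝ)
    (hχ : ∀ j, χ j = Set.indicator (Set.Ioo (t j.castSucc) (t j.succ)) fun _ => (1 : ℝ))
    (u : ℝ → X)
    (hu : ∀ τ, u τ = ∑ j, χ j τ • (∑ k, U k j • φ k))
    (σ : ℝ) (hσ : 0 < σ)
    (w : Fin s → ℝ) (f : ℝ → ℝ) (hf : ∀ τ, f τ = ∑ ℓ, w ℓ * χ ℓ τ)
    (v : Fin m → ℝ) (x : X) (hx : x = ∑ k, v k • φ k) :
    ((fun τ => (inner ℝ x (u τ) : ℝ))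
        =ᵐ[volume.restrict (Set.Ioo (0 : ℝ) T)] fun τ => σ * f τ) ↔
      Uᵀ *ᵥ (M *ᵥ v) = σ • w :=
  pod_adjoint_eq_iff_matrix_general T t ht ht0 htT φ M hM U χ hχ u hu σ w f hf v x hx
end
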